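/- Let H be a Hopf quasigroup and M a Long H-dimodule. Then for all m ∈ M: ρ^M(S(m⁽¹⁾)·m⁽⁰⁾) = S(m⁽¹⁾₍₂₎)·m⁽⁰⁾ ⊗ m⁽¹⁾₍₁₎. -/
import Mathlib


open TensorProduct

/-- A Hopf quasigroup over a field `k`: a unital (not necessarily associative) algebra
and coassociative counital coalgebra, with `comul` and `counit` algebra maps, together
with an antipode `antipode` satisfying
`S(h₁)(h₂g) = h₁(S(h₂)g) = (gh₁)S(h₂) = (gS(h₁))h₂ = ε(h)g`. -/
structure HopfQuasigroup (k : Type*) [Field k] (H : Type*) [AddCommMonoid H] [Module k H] where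
  mul : H →ₗ[k] H →ₗ[k] H
  one : H
  comul : H →ₗ[k] H ⊗[k] H
  counit : H →ₗ[k] k
  antipode : H →ₗ[k] H
  one_mul : ∀ h, mul one h = h
  mul_one : ∀ h, mul h one = h
  coassoc : ∀ h, (TensorProduct.assoc k H H H) ((comul.rTensor H) (comul h))
      = (LinearMap.lTensor H comul) (comul h)
  counit_comul : ∀ h, (TensorProduct.lid k H) ((counit.rTensor H) (comul h)) = h
  comul_counit : ∀ h, (TensorProduct.rid k H) ((LinearMap.lTensor H counit) (comul h)) = h
  counit_one : counit one = 1
  counit_mul : ∀ a b, counit (mul a b) = counit a * counit b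
  comul_one : comul one = one ⊗ₜ[k] one
  comul_mul : ∀ a b, comul (mul a b)
      = (TensorProduct.map (TensorProduct.lift mul) (TensorProduct.lift mul))
          ((TensorProduct.tensorTensorTensorComm k H H H H) ((comul a) ⊗ₜ[k] (comul b)))
  -- `S(h₁)(h₂ g) = ε(h) g`
  antipode_mul_left : ∀ g h,
      TensorProduct.lift ((mul.comp antipode).compl₂ (mul.flip g)) (comul h) = counit h • g
  -- `h₁(S(h₂) g) = ε(h) g`
  mul_antipode_left : ∀ g h,
      TensorProduct.lift (mul.compl₂ ((mul.comp antipode).flip g)) (comul h) = counit h • g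
  -- `(g h₁)S(h₂) = ε(h) g`
  antipode_mul_right : ∀ g h,
      TensorProduct.lift ((mul.comp (mul g)).compl₂ antipode) (comul h) = counit h • g
  -- `(g S(h₁))h₂ = ε(h) g`
  mul_antipode_right : ∀ g h,
      TensorProduct.lift (mul.comp ((mul g).comp antipode)) (comul h) = counit h • g

variable {k H : Type*} [Field k] [AddCommMonoid H] [Module k H]

/-- A left quasimodule over a Hopf quasigroup: `1·m = m` and
`h₁·(S(h₂)·m) = ε(h)m = S(h₁)·(h₂·m)`. -/
structure LeftQuasimodule (hq : HopfQuasigroup k H) (M : Type*)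
    [AddCommMonoid M] [Module k M] where
  act : H →ₗ[k] M →ₗ[k] M
  act_one : ∀ m, act hq.one m = m
  -- `h₁·(S(h₂)·m) = ε(h) m`
  act_antipode : ∀ h m,
      TensorProduct.lift (act.compl₂ ((act.comp hq.antipode).flip m)) (hq.comul h)
        = hq.counit h • m
  -- `S(h₁)·(h₂·m) = ε(h) m`
  antipode_act : ∀ h m,
      TensorProduct.lift ((act.comp hq.antipode).compl₂ (act.flip m)) (hq.comul h)
        = hq.counit h • m

/-- A counital coassociative right comodule over a Hopf quasigroup. -/
structure RightComodule (hq : HopfQuasigroup k H) (M : Type*)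
    [AddCommMonoid M] [Module k M] where
  coact : M →ₗ[k] M ⊗[k] H
  coassoc : ∀ m, (TensorProduct.assoc k M H H) ((coact.rTensor H) (coact m))
      = (LinearMap.lTensor M hq.comul) (coact m)
  coact_counit : ∀ m, (TensorProduct.rid k M) ((LinearMap.lTensor M hq.counit) (coact m)) = m

/-- A Long dimodule over a Hopf quasigroup: a left quasimodule and a counital
coassociative right comodule such that `(h·m)⁽⁰⁾⊗(h·m)⁽¹⁾ = h·m⁽⁰⁾⊗m⁽¹⁾`. -/
structure LongDimodule (hq : HopfQuasigroup k H) (M : Type*)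
    [AddCommMonoid M] [Module k M] extends LeftQuasimodule hq M, RightComodule hq M where
  compat : ∀ h m, coact (act h m) = ((act h).rTensor H) (coact m)


/-- The map `m ⊗ h ↦ S(h)·m`. -/
noncomputable def sAct {hq : HopfQuasigroup k H} {M : Type*} [AddCommMonoid M] [Module k M]
    (ld : LongDimodule hq M) : M ⊗[k] H →ₗ[k] M :=
  TensorProduct.lift (ld.act.comp hq.antipode).flip

/-- The element `S(m⁽¹⁾₍₂₎)·m⁽⁰⁾ ⊗ m⁽¹⁾₍₁₎` of `M ⊗ H`. -/
noncomputable def twistedCoact {hq : HopfQuasigroup k H} {M : Type*}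
    [AddCommMonoid M] [Module k M] (ld : LongDimodule hq M) (m : M) : M ⊗[k] H :=
  ((sAct ld).rTensor H) ((TensorProduct.assoc k M H H).symm
    ((LinearMap.lTensor M (((TensorProduct.comm k H H).toLinearMap).comp hq.comul))
      (ld.coact m)))

/-- For a Long dimodule `M` over a Hopf quasigroup `H`:
`ρ^M(S(m⁽¹⁾)·m⁽⁰⁾) = S(m⁽¹⁾₍₂₎)·m⁽⁰⁾ ⊗ m⁽¹⁾₍₁₎`. -/
theorem longDimodule_coact_sAct {hq : HopfQuasigroup k H} {M : Type*}
    [AddCommMonoid M] [Module k M] (ld : LongDimodule hq M) (m : M) :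
    ld.coact (sAct ld (ld.coact m)) = twistedCoact ld m := by
  have key : ∀ t : M ⊗[k] H, ld.coact (sAct ld t) =
      ((sAct ld).rTensor H) ((TensorProduct.assoc k M H H).symm
        ((LinearMap.lTensor M (TensorProduct.comm k H H).toLinearMap)
          ((TensorProduct.assoc k M H H) ((ld.coact.rTensor H) t)))) := by
    intro t
    induction t with
    | zero => simp
    | add x y hx hy => simp [hx, hy, map_add]
    | tmul x h =>
      have hc : ld.coact (sAct ld (x ⊗ₜ[k] h))
          = ((ld.act (hq.antipode h)).rTensor H) (ld.coact x) := by
        simp [sAct, ld.compat]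
      rw [hc]
      have hr : ((ld.coact.rTensor H) (x ⊗ₜ[k] h)) = (ld.coact x) ⊗ₜ[k] h := by
        simp
      rw [hr]
      induction ld.coact x with
      | zero => simp [TensorProduct.zero_tmul]
      | add a b ha hb =>
        simp only [map_add, TensorProduct.add_tmul] at *
        rw [ha, hb]
      | tmul a b => simp [sAct]
  rw [key]
  have hco := ld.coassoc m
  rw [twistedCoact]
  rw [show (LinearMap.lTensor M (((TensorProduct.comm k H H).toLinearMap).comp hq.comul))
      = (LinearMap.lTensor M (TensorProduct.comm k H H).toLinearMap).comp
        (LinearMap.lTensor M hq.comul) from LinearMap.lTensor_comp M _ _]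
  simp only [LinearMap.comp_apply, ← hco]
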